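/- For fixed μ₁, μ₂ ∈ ℂ, the operators E₁₁ˡ = −s d/ds − (1/2 + μ₁), E₁₂ˡ = d/ds, E₂₁ˡ = −s² d/ds + (−1−μ₁+μ₂)s, E₂₂ˡ = s d/ds + (1/2 − μ₂), acting on smooth ℂ-valued functions of a real variable s, satisfy the gl(2) commutation relations [E_{ij}, E_{kl}] = δ_{jk}E_{il} − δ_{li}E_{kj}. -/

import Mathlib

/-- Operators on smooth ℂ-valued functions of a real variable. -/
abbrev OpC := (ℝ → ℂ) → (ℝ → ℂ)

/-- The operators `E₁₁ˡ = −s d/ds − (1/2 + μ₁)`, `E₁₂ˡ = d/ds`,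
`E₂₁ˡ = −s² d/ds + (−1−μ₁+μ₂)s`, `E₂₂ˡ = s d/ds + (1/2 − μ₂)`. -/
noncomputable def El (μ₁ μ₂ : ℂ) (i j : Fin 2) : OpC :=
  ![![fun (f : ℝ → ℂ) (s : ℝ) => -((s : ℂ) * deriv f s) - (1/2 + μ₁) * f s,
     fun (f : ℝ → ℂ) (s : ℝ) => deriv f s],
    ![fun (f : ℝ → ℂ) (s : ℝ) => -((s : ℂ)^2 * deriv f s) + (-1 - μ₁ + μ₂) * (s : ℂ) * f s,
     fun (f : ℝ → ℂ) (s : ℝ) => (s : ℂ) * deriv f s + (1/2 - μ₂) * f s]] i j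

lemma hR (s : ℝ) : HasDerivAt (fun x : ℝ => (x:ℂ)) 1 s := by
  simpa using (hasDerivAt_id s).ofReal_comp

lemma h1' (f : ℝ → ℂ) (hf : ContDiff ℝ (⊤ : ℕ∞) f) (s : ℝ) : HasDerivAt f (deriv f s) s :=
  (hf.differentiable (by simp) s).hasDerivAt

lemma h2' (f : ℝ → ℂ) (hf : ContDiff ℝ (⊤ : ℕ∞) f) (s : ℝ) :
    HasDerivAt (deriv f) (deriv (deriv f) s) s := by
  have hf' : ContDiff ℝ ((⊤ : ℕ∞) : WithTop ℕ∞) f := hf.of_le (by simp)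
  have h := (contDiff_infty_iff_deriv.mp hf').2
  exact ((h.differentiable (by simp) s).hasDerivAt)

lemma dA (f : ℝ → ℂ) (hf : ContDiff ℝ (⊤ : ℕ∞) f) (c : ℂ) (s : ℝ) :
    deriv (fun s : ℝ => -((s:ℂ) * deriv f s) - c * f s) s
      = -(deriv f s + (s:ℂ) * deriv (deriv f) s) - c * deriv f s := by
  have h := (((hR s).mul (h2' f hf s)).neg.sub ((h1' f hf s).const_mul c))
  have h' : HasDerivAt (fun s : ℝ => -((s:ℂ) * deriv f s) - c * f s)
      (-(deriv f s + (s:ℂ) * deriv (deriv f) s) - c * deriv f s) s := by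
    exact h.congr_deriv (by ring)
  exact h'.deriv

lemma dC (f : ℝ → ℂ) (hf : ContDiff ℝ (⊤ : ℕ∞) f) (c : ℂ) (s : ℝ) :
    deriv (fun s : ℝ => -((s:ℂ)^2 * deriv f s) + c * (s:ℂ) * f s) s
      = -(2*(s:ℂ) * deriv f s + (s:ℂ)^2 * deriv (deriv f) s) + c * f s + c * (s:ℂ) * deriv f s := by
  have hp : HasDerivAt (fun x : ℝ => (x:ℂ)^2) (2*(s:ℂ)) s := by
    have h := (hR s).mul (hR s)
    convert h using 1
    · ext x; ring
    · ext x; simp [sq]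
    · ring
  have h := ((hp.mul (h2' f hf s)).neg.add (((hR s).const_mul c).mul (h1' f hf s)))
  have h' : HasDerivAt (fun s : ℝ => -((s:ℂ)^2 * deriv f s) + c * (s:ℂ) * f s)
      (-(2*(s:ℂ) * deriv f s + (s:ℂ)^2 * deriv (deriv f) s) + c * f s + c * (s:ℂ) * deriv f s) s := by
    exact h.congr_deriv (by ring)
  exact h'.deriv

lemma dD (f : ℝ → ℂ) (hf : ContDiff ℝ (⊤ : ℕ∞) f) (c : ℂ) (s : ℝ) :
    deriv (fun s : ℝ => (s:ℂ) * deriv f s + c * f s) s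
      = deriv f s + (s:ℂ) * deriv (deriv f) s + c * deriv f s := by
  have h := (((hR s).mul (h2' f hf s)).add ((h1' f hf s).const_mul c))
  have h' : HasDerivAt (fun s : ℝ => (s:ℂ) * deriv f s + c * f s)
      (deriv f s + (s:ℂ) * deriv (deriv f) s + c * deriv f s) s := by
    exact h.congr_deriv (by ring)
  exact h'.deriv

/-- The operators `E_{ij}ˡ` satisfy the `gl(2)` commutation relations
`[E_{ij}, E_{kl}] = δ_{jk} E_{il} − δ_{li} E_{kj}` on smooth functions. -/
theorem El_commutation (μ₁ μ₂ : ℂ) (i j k l : Fin 2) (f : ℝ → ℂ)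
    (hf : ContDiff ℝ (⊤ : ℕ∞) f) (s : ℝ) :
    El μ₁ μ₂ i j (El μ₁ μ₂ k l f) s - El μ₁ μ₂ k l (El μ₁ μ₂ i j f) s =
      (if j = k then El μ₁ μ₂ i l f s else 0) -
      (if l = i then El μ₁ μ₂ k j f s else 0) := by
  fin_cases i <;> fin_cases j <;> fin_cases k <;> fin_cases l <;>
    simp only [El, Matrix.cons_val_zero, Matrix.cons_val_one, Matrix.head_cons, Fin.isValue,
      dA f hf, dC f hf, dD f hf, Fin.mk_zero, Fin.mk_one, if_true, if_false, reduceIte,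
      Fin.zero_eta, one_ne_zero, zero_ne_one] <;>
    ring
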